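/- arXiv:1710.07078 — 3 statements merged into one kernel-verified Lean document; each statement's English description precedes it below -/
import Mathlib

section
/- For integers 1 ≤ k ≤ h, the following q-identity holds: ∑_{a=0}^{k-1} (-1)^a q^{binom(a,2)} (q;q)_k (q;q)_{k-a+h-1} / ( (q;q)_{k-a-1} (q;q)_a (q;q)_{k-a} (q;q)_h ) = q^{k(k-1)} [h-1 choose k-1]_q. -/
open Finset

/-- q-Pochhammer symbol: (x;q)_m = ∏_{j=0}^{m-1} (1 - x q^j). -/
noncomputable def qPoch {F : Type*} [Field F] (x q : F) (m : ℕ) : F :=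
  ∏ j ∈ Finset.range m, (1 - x * q ^ j)

/-- (q;q)_m = ∏_{j=1}^{m} (1 - q^j). -/
noncomputable def qFac {F : Type*} [Field F] (q : F) (m : ℕ) : F := qPoch q q m

/-- Gaussian binomial coefficient [n choose a]_q = (q;q)_n / ((q;q)_a (q;q)_{n-a}). -/
noncomputable def qBinom {F : Type*} [Field F] (q : F) (n a : ℕ) : F :=
  if a ≤ n then qFac q n / (qFac q a * qFac q (n - a)) else 0

/-!
Both sides are specializations of the alternating sum
`S(l, n, m) = ∑_{j ≤ l} (-1)^j q^(j choose 2) [l, j] [n - j, m]`. The `q`-Pascal rule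
`[l+1, j+1] = q^(l-j) [l, j] + [l, j+1]` gives the recursion `S(l+1, n) = S(l, n) - q^l S(l, n-1)`,
and the other `q`-Pascal rule shows that `q^(l(n-m)) [n-l, n-m]` satisfies the same recursion,
so `S(l, n, m) = q^(l(n-m)) [n-l, n-m]`. With `l = k`, `n = h+k-1`, `m = h` the summands are those
of the theorem and the term `j = k` vanishes.
-/

theorem RatFunc.not_isOfFinOrder_X {K : Type*} [Field K] :
    ¬IsOfFinOrder (RatFunc.X : RatFunc K) := by
  rw [isOfFinOrder_iff_pow_eq_one]
  rintro ⟨n, hn, hXn⟩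
  have hdeg := congrArg RatFunc.intDegree hXn
  rw [← RatFunc.algebraMap_X, ← map_pow, RatFunc.intDegree_polynomial,
    Polynomial.natDegree_X_pow, RatFunc.intDegree_one] at hdeg
  omega

section QBinom

variable {F : Type*} [Field F] {q : F}

theorem qFac_zero : qFac q 0 = 1 := by
  rw [qFac, qPoch, prod_range_zero]

theorem qFac_succ (m : ℕ) : qFac q (m + 1) = qFac q m * (1 - q ^ (m + 1)) := by
  rw [qFac, qPoch, prod_range_succ, pow_succ']
  rfl

theorem one_sub_pow_succ_ne_zero (hq : ¬IsOfFinOrder q) (j : ℕ) : 1 - q ^ (j + 1) ≠ 0 := by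
  rw [isOfFinOrder_iff_pow_eq_one] at hq
  exact sub_ne_zero.2 fun h => hq ⟨j + 1, j.succ_pos, h.symm⟩

theorem qFac_ne_zero (hq : ¬IsOfFinOrder q) (m : ℕ) : qFac q m ≠ 0 := by
  unfold qFac qPoch
  exact prod_ne_zero_iff.2 fun j _ => pow_succ' q j ▸ one_sub_pow_succ_ne_zero hq j

theorem qBinom_of_le {n a : ℕ} (h : a ≤ n) :
    qBinom q n a = qFac q n / (qFac q a * qFac q (n - a)) :=
  if_pos h

theorem qBinom_of_lt {n a : ℕ} (h : n < a) : qBinom q n a = 0 :=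
  if_neg (Nat.not_le.2 h)

theorem qBinom_zero_right (hq : ¬IsOfFinOrder q) (n : ℕ) : qBinom q n 0 = 1 := by
  rw [qBinom_of_le n.zero_le, qFac_zero, one_mul, Nat.sub_zero, div_self (qFac_ne_zero hq n)]

theorem qBinom_self (hq : ¬IsOfFinOrder q) (n : ℕ) : qBinom q n n = 1 := by
  rw [qBinom_of_le le_rfl, Nat.sub_self, qFac_zero, mul_one, div_self (qFac_ne_zero hq n)]

theorem qBinom_symm {n m : ℕ} (h : m ≤ n) : qBinom q n m = qBinom q n (n - m) := by
  rw [qBinom_of_le h, qBinom_of_le (n.sub_le m), Nat.sub_sub_self h, mul_comm]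

theorem qBinom_succ_succ (hq : ¬IsOfFinOrder q) (N a : ℕ) :
    qBinom q (N + 1) (a + 1) = qBinom q N a + q ^ (a + 1) * qBinom q N (a + 1) := by
  rcases lt_trichotomy a N with h | rfl | h
  · obtain ⟨s, rfl⟩ : ∃ s, N = a + 1 + s := ⟨N - a - 1, by omega⟩
    rw [qBinom_of_le (by omega), qBinom_of_le (by omega), qBinom_of_le (by omega),
      show a + 1 + s + 1 - (a + 1) = s + 1 by omega, show a + 1 + s - a = s + 1 by omega,
      show a + 1 + s - (a + 1) = s by omega, qFac_succ (a + 1 + s), qFac_succ a, qFac_succ s]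
    have hfac := qFac_ne_zero hq
    have ha := one_sub_pow_succ_ne_zero hq a
    have hs := one_sub_pow_succ_ne_zero hq s
    field_simp
    ring
  · rw [qBinom_self hq, qBinom_self hq, qBinom_of_lt a.lt_succ_self, mul_zero, add_zero]
  · rw [qBinom_of_lt (by omega), qBinom_of_lt h, qBinom_of_lt (by omega), mul_zero, add_zero]

theorem qBinom_succ_succ' (hq : ¬IsOfFinOrder q) (N a : ℕ) :
    qBinom q (N + 1) (a + 1) = q ^ (N - a) * qBinom q N a + qBinom q N (a + 1) := by
  rcases lt_trichotomy a N with h | rfl | h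
  · obtain ⟨s, rfl⟩ : ∃ s, N = a + 1 + s := ⟨N - a - 1, by omega⟩
    rw [qBinom_symm (show a + 1 ≤ a + 1 + s + 1 by omega),
      qBinom_symm (show a ≤ a + 1 + s by omega), qBinom_symm (show a + 1 ≤ a + 1 + s by omega),
      show a + 1 + s + 1 - (a + 1) = s + 1 by omega, show a + 1 + s - a = s + 1 by omega,
      show a + 1 + s - (a + 1) = s by omega, qBinom_succ_succ hq, add_comm]
  · rw [qBinom_self hq, qBinom_self hq, qBinom_of_lt a.lt_succ_self, Nat.sub_self, pow_zero,
      one_mul, add_zero]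
  · rw [qBinom_of_lt (by omega), qBinom_of_lt h, qBinom_of_lt (by omega), mul_zero, zero_add]

variable (q) in
noncomputable def qAltSum (l n m : ℕ) : F :=
  ∑ j ∈ range (l + 1), (-1) ^ j * q ^ j.choose 2 * qBinom q l j * qBinom q (n - j) m

theorem qAltSum_zero (hq : ¬IsOfFinOrder q) (n m : ℕ) : qAltSum q 0 n m = qBinom q n m := by
  simp [qAltSum, qBinom_zero_right hq]

theorem qAltSum_of_lt {l n m : ℕ} (h : n < m) : qAltSum q l n m = 0 :=
  sum_eq_zero fun j _ => by rw [qBinom_of_lt (show n - j < m by omega), mul_zero]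

theorem qAltSum_succ (hq : ¬IsOfFinOrder q) (l n m : ℕ) :
    qAltSum q (l + 1) n m = qAltSum q l n m - q ^ l * qAltSum q l (n - 1) m := by
  have hpad : qAltSum q l n m =
      ∑ j ∈ range (l + 2), (-1) ^ j * q ^ j.choose 2 * qBinom q l j * qBinom q (n - j) m := by
    rw [sum_range_succ _ (l + 1), qBinom_of_lt (l.lt_succ_self), mul_zero, zero_mul, add_zero,
      qAltSum]
  suffices qAltSum q (l + 1) n m - qAltSum q l n m = -(q ^ l * qAltSum q l (n - 1) m) by
    linear_combination this
  rw [hpad]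
  simp only [qAltSum]
  rw [← sum_sub_distrib, sum_range_succ', qBinom_zero_right hq, qBinom_zero_right hq, sub_self,
    add_zero, mul_sum, ← sum_neg_distrib]
  refine sum_congr rfl fun i hi => ?_
  have hi : i ≤ l := Nat.lt_succ_iff.1 (mem_range.1 hi)
  have hpow : q ^ (i + 1).choose 2 * q ^ (l - i) = q ^ i.choose 2 * q ^ l := by
    rw [← pow_add, ← pow_add, Nat.choose_succ_succ', Nat.choose_one_right]
    congr 1
    rw [add_comm i, add_assoc, Nat.add_sub_cancel' hi]
  rw [qBinom_succ_succ' hq, show n - (i + 1) = n - 1 - i by omega]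
  linear_combination (-1) ^ (i + 1) * qBinom q l i * qBinom q (n - 1 - i) m * hpow

theorem qAltSum_eq (hq : ¬IsOfFinOrder q) {l n m : ℕ} (hl : l ≤ n) (hm : m ≤ n) :
    qAltSum q l n m = q ^ (l * (n - m)) * qBinom q (n - l) (n - m) := by
  induction l generalizing n with
  | zero =>
    rw [qAltSum_zero hq, zero_mul, pow_zero, one_mul, Nat.sub_zero, qBinom_symm hm]
  | succ l ih =>
    rw [qAltSum_succ hq]
    rcases hm.eq_or_lt with rfl | hm
    · rw [qAltSum_of_lt (show m - 1 < m by omega), ih (by omega) le_rfl]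
      simp [qBinom_zero_right hq]
    obtain ⟨d, hd⟩ : ∃ d, n - m = d + 1 := ⟨n - m - 1, by omega⟩
    obtain ⟨e, he⟩ : ∃ e, n - l = e + 1 := ⟨n - l - 1, by omega⟩
    rw [ih (by omega) hm.le, ih (by omega) (by omega), hd, he, show n - 1 - m = d by omega,
      show n - 1 - l = e by omega, show n - (l + 1) = e by omega, qBinom_succ_succ hq]
    ring

end QBinom

/-- For 1 ≤ k ≤ h:
∑_{a=0}^{k-1} (-1)^a q^{binom(a,2)} (q;q)_k (q;q)_{k-a+h-1}
  / ((q;q)_{k-a-1}(q;q)_a(q;q)_{k-a}(q;q)_h) = q^{k(k-1)} [h-1 choose k-1]_q, in ℚ(q). -/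
theorem key_q_identity (k h : ℕ) (hk : 1 ≤ k) (hkh : k ≤ h) :
    ∑ a ∈ Finset.range k,
        (-1 : RatFunc ℚ) ^ a * (RatFunc.X : RatFunc ℚ) ^ (a.choose 2) *
          qFac (RatFunc.X : RatFunc ℚ) k * qFac (RatFunc.X : RatFunc ℚ) (k - a + h - 1) /
          (qFac (RatFunc.X : RatFunc ℚ) (k - a - 1) * qFac (RatFunc.X : RatFunc ℚ) a *
            qFac (RatFunc.X : RatFunc ℚ) (k - a) * qFac (RatFunc.X : RatFunc ℚ) h) =
      (RatFunc.X : RatFunc ℚ) ^ (k * (k - 1)) * qBinom (RatFunc.X : RatFunc ℚ) (h - 1) (k - 1) := by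
  have hX := RatFunc.not_isOfFinOrder_X (K := ℚ)
  have hsum := qAltSum_eq hX (l := k) (n := h + k - 1) (m := h) (by omega) (by omega)
  rw [qAltSum, sum_range_succ, qBinom_of_lt (show h + k - 1 - k < h by omega), mul_zero,
    add_zero, show h + k - 1 - k = h - 1 by omega, show h + k - 1 - h = k - 1 by omega] at hsum
  rw [← hsum]
  refine sum_congr rfl fun a ha => ?_
  have ha : a < k := mem_range.1 ha
  rw [qBinom_of_le ha.le, qBinom_of_le (by omega), show h + k - 1 - a = k - a + h - 1 by omega,
    show k - a + h - 1 - h = k - a - 1 by omega]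
  have hfac := qFac_ne_zero hX
  field_simp
end

section
/- (Terminating 2φ1 evaluation) For integers m ≥ 0 and parameters b, c (with c avoiding poles), (b;q)_m / (c;q)_m = ∑_{n=0}^{m} (q^{-m};q)_n (c/b;q)_n / ((q;q)_n (c;q)_n) · (b q^m)^n. -/
open Finset

/-- The field ℚ(q, b, c) of rational functions in three indeterminates. -/
noncomputable abbrev K3 : Type := FractionRing (MvPolynomial (Fin 3) ℚ)

noncomputable def qV : K3 := algebraMap (MvPolynomial (Fin 3) ℚ) K3 (MvPolynomial.X 0)
noncomputable def bV : K3 := algebraMap (MvPolynomial (Fin 3) ℚ) K3 (MvPolynomial.X 1)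
noncomputable def cV : K3 := algebraMap (MvPolynomial (Fin 3) ℚ) K3 (MvPolynomial.X 2)

/-! Clearing the denominators `b` and `q ^ m`, the identity becomes one that is polynomial in `b`,
`∑ₙ ∏_{j<n} (q^m - q^j) · ∏_{j<n} (b - c q^j) / ((q;q)ₙ (c;q)ₙ) = (b;q)_m / (c;q)_m`,
proved by induction on `m` for all `b, c` at once. The q-Pascal rule expresses
`∏_{j<n} (q^{m+1} - q^j)` through the products for `m`; after an Abel summation each term of the
sum for `m + 1` becomes `(1 - b) / (1 - c)` times the corresponding term of the sum for `m` at
`(bq, cq)`, and `(1 - b) (bq;q)_m = (b;q)_{m+1}`. -/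

section QPochhammer

variable {F : Type*} [Field F]

def homQPoch (x y q : F) (n : ℕ) : F :=
  ∏ j ∈ range n, (x - y * q ^ j)

theorem homQPoch_zero (x y q : F) : homQPoch x y q 0 = 1 := prod_range_zero _

theorem qPoch_eq_homQPoch (x q : F) (n : ℕ) : qPoch x q n = homQPoch 1 x q n := rfl

theorem homQPoch_succ (x y q : F) (n : ℕ) :
    homQPoch x y q (n + 1) = homQPoch x y q n * (x - y * q ^ n) :=
  prod_range_succ _ _

theorem homQPoch_succ' (x y q : F) (n : ℕ) :
    homQPoch x y q (n + 1) = (x - y) * homQPoch x (y * q) q n := by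
  simp only [homQPoch, prod_range_succ', pow_zero, mul_one, pow_succ, mul_assoc, mul_comm q]
  ring

theorem homQPoch_mul_mul (a x y q : F) (n : ℕ) :
    homQPoch (a * x) (a * y) q n = a ^ n * homQPoch x y q n := by
  simp [homQPoch, mul_assoc, ← mul_sub, prod_mul_distrib]

theorem qPoch_div_mul_pow {x : F} (hx : x ≠ 0) (y q : F) (n : ℕ) :
    qPoch (y / x) q n * x ^ n = homQPoch x y q n := by
  rw [mul_comm, qPoch_eq_homQPoch, ← homQPoch_mul_mul, mul_one, mul_div_cancel₀ _ hx]

theorem homQPoch_pow_self_succ (q : F) (m : ℕ) : homQPoch (q ^ m) 1 q (m + 1) = 0 :=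
  prod_eq_zero (self_mem_range_succ m) (by rw [one_mul, sub_self])

theorem homQPoch_mul_succ (x y q : F) (n : ℕ) :
    homQPoch (x * q) y q (n + 1) =
      q ^ (n + 1) * homQPoch x y q (n + 1) -
        y * q ^ n * (1 - q ^ (n + 1)) * homQPoch x y q n := by
  rw [homQPoch_succ', mul_comm x, mul_comm y, homQPoch_mul_mul, homQPoch_succ]
  ring

theorem qPoch_succ (x q : F) (n : ℕ) : qPoch x q (n + 1) = qPoch x q n * (1 - x * q ^ n) :=
  homQPoch_succ 1 x q n

theorem qPoch_succ' (x q : F) (n : ℕ) : qPoch x q (n + 1) = (1 - x) * qPoch (x * q) q n :=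
  homQPoch_succ' 1 x q n

theorem qPoch_ne_zero {x q : F} (h : ∀ j : ℕ, 1 - x * q ^ j ≠ 0) (n : ℕ) :
    qPoch x q n ≠ 0 :=
  prod_ne_zero_iff.mpr fun j _ => h j

theorem sum_range_homQPoch_pow_succ_mul (q : F) (m : ℕ) (f : ℕ → F) :
    ∑ n ∈ range (m + 2), homQPoch (q ^ (m + 1)) 1 q n * f n =
      ∑ n ∈ range (m + 1),
        q ^ n * homQPoch (q ^ m) 1 q n * (f n - (1 - q ^ (n + 1)) * f (n + 1)) := by
  have htop : ∑ n ∈ range (m + 2), q ^ n * homQPoch (q ^ m) 1 q n * f n =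
      ∑ n ∈ range (m + 1), q ^ n * homQPoch (q ^ m) 1 q n * f n := by
    rw [sum_range_succ, homQPoch_pow_self_succ, mul_zero, zero_mul, add_zero]
  have hsplit : ∀ n, (q ^ (n + 1) * homQPoch (q ^ m) 1 q (n + 1) -
      1 * q ^ n * (1 - q ^ (n + 1)) * homQPoch (q ^ m) 1 q n) * f (n + 1) =
      q ^ (n + 1) * homQPoch (q ^ m) 1 q (n + 1) * f (n + 1) -
        q ^ n * homQPoch (q ^ m) 1 q n * ((1 - q ^ (n + 1)) * f (n + 1)) := fun n => by ring
  simp only [mul_sub, sum_sub_distrib, ← htop]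
  rw [sum_range_succ', sum_range_succ' (fun n => q ^ n * _ * f n), pow_succ q m]
  simp only [homQPoch_mul_succ, hsplit, sum_sub_distrib, homQPoch_zero]
  ring

end QPochhammer

section ChuVandermonde

variable {F : Type*} [Field F] {q : F}

noncomputable def chuVandermondeCoeff (b c q : F) (n : ℕ) : F :=
  homQPoch b c q n / (qPoch q q n * qPoch c q n)

theorem pow_mul_chuVandermondeCoeff_sub_succ (hq : ∀ j : ℕ, 1 - q ^ (j + 1) ≠ 0) {c : F}
    (hc : ∀ j : ℕ, 1 - c * q ^ j ≠ 0) (b : F) (n : ℕ) :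
    q ^ n * (chuVandermondeCoeff b c q n -
        (1 - q ^ (n + 1)) * chuVandermondeCoeff b c q (n + 1)) =
      (1 - b) / (1 - c) * chuVandermondeCoeff (b * q) (c * q) q n := by
  have hQ : qPoch q q n ≠ 0 := qPoch_ne_zero (fun j => by rw [← pow_succ']; exact hq j) n
  have hC : qPoch c q n ≠ 0 := qPoch_ne_zero hc n
  have hCq : qPoch (c * q) q n ≠ 0 :=
    qPoch_ne_zero (fun j => by rw [mul_assoc, ← pow_succ']; exact hc (j + 1)) n
  have hc0 : 1 - c ≠ 0 := by simpa using hc 0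
  have hcn := hc n
  have hqn := hq n
  have hshift : qPoch c q n * (1 - c * q ^ n) = (1 - c) * qPoch (c * q) q n := by
    rw [← qPoch_succ, qPoch_succ']
  rw [chuVandermondeCoeff, chuVandermondeCoeff, chuVandermondeCoeff, homQPoch_succ,
    qPoch_succ q q n, ← pow_succ', qPoch_succ c q n, hshift,
    show homQPoch (b * q) (c * q) q n = q ^ n * homQPoch b c q n by
      rw [mul_comm b, mul_comm c, homQPoch_mul_mul]]
  field_simp
  linear_combination -(q ^ n * homQPoch b c q n) * hshift

theorem sum_homQPoch_mul_chuVandermondeCoeff (hq : ∀ j : ℕ, 1 - q ^ (j + 1) ≠ 0) (m : ℕ)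
    {b c : F} (hc : ∀ j : ℕ, 1 - c * q ^ j ≠ 0) :
    ∑ n ∈ range (m + 1), homQPoch (q ^ m) 1 q n * chuVandermondeCoeff b c q n =
      qPoch b q m / qPoch c q m := by
  induction m generalizing b c with
  | zero => simp [chuVandermondeCoeff, homQPoch, qPoch]
  | succ m ih =>
    have hcq : ∀ j : ℕ, 1 - c * q * q ^ j ≠ 0 := fun j => by
      rw [mul_assoc, ← pow_succ']; exact hc (j + 1)
    calc _ = ∑ n ∈ range (m + 1), homQPoch (q ^ m) 1 q n *
            ((1 - b) / (1 - c) * chuVandermondeCoeff (b * q) (c * q) q n) := by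
          rw [sum_range_homQPoch_pow_succ_mul]
          refine sum_congr rfl fun n _ => ?_
          rw [← pow_mul_chuVandermondeCoeff_sub_succ hq hc, mul_assoc, mul_left_comm]
      _ = (1 - b) / (1 - c) * (qPoch (b * q) q m / qPoch (c * q) q m) := by
          rw [← ih hcq, mul_sum]
          exact sum_congr rfl fun n _ => mul_left_comm _ _ _
      _ = qPoch b q (m + 1) / qPoch c q (m + 1) := by
          rw [qPoch_succ' b, qPoch_succ' c, mul_div_mul_comm]

theorem qPoch_div_qPoch_eq_sum (hq0 : q ≠ 0) (hq : ∀ j : ℕ, 1 - q ^ (j + 1) ≠ 0) {b c : F}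
    (hb : b ≠ 0) (hc : ∀ j : ℕ, 1 - c * q ^ j ≠ 0) (m : ℕ) :
    qPoch b q m / qPoch c q m =
      ∑ n ∈ range (m + 1),
        qPoch (q ^ (-(m : ℤ))) q n * qPoch (c / b) q n / (qPoch q q n * qPoch c q n) *
          (b * q ^ m) ^ n := by
  rw [← sum_homQPoch_mul_chuVandermondeCoeff hq m hc]
  refine sum_congr rfl fun n _ => ?_
  rw [chuVandermondeCoeff, zpow_neg, zpow_natCast, inv_eq_one_div,
    ← qPoch_div_mul_pow (pow_ne_zero m hq0), ← qPoch_div_mul_pow hb, mul_pow]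
  ring

end ChuVandermonde

theorem MvPolynomial.algebraMap_fractionRing_ne_zero {σ R : Type*} [CommRing R] [IsDomain R]
    {p : MvPolynomial σ R} (hp : p ≠ 0) :
    algebraMap _ (FractionRing (MvPolynomial σ R)) p ≠ 0 :=
  (map_ne_zero_iff _ (IsFractionRing.injective _ _)).mpr hp

theorem one_sub_qV_pow_succ_ne_zero (j : ℕ) : 1 - qV ^ (j + 1) ≠ 0 := by
  have h := MvPolynomial.algebraMap_fractionRing_ne_zero
    (p := (1 - MvPolynomial.X 0 ^ (j + 1) : MvPolynomial (Fin 3) ℚ))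
    (fun h => by simpa using congrArg MvPolynomial.constantCoeff h)
  rwa [map_sub, map_one, map_pow] at h

theorem one_sub_cV_mul_qV_pow_ne_zero (j : ℕ) : 1 - cV * qV ^ j ≠ 0 := by
  have h := MvPolynomial.algebraMap_fractionRing_ne_zero
    (p := (1 - MvPolynomial.X 2 * MvPolynomial.X 0 ^ j : MvPolynomial (Fin 3) ℚ))
    (fun h => by simpa using congrArg MvPolynomial.constantCoeff h)
  rwa [map_sub, map_one, map_mul, map_pow] at h

/-- (Terminating 2φ1 evaluation / q-Chu–Vandermonde) For m ≥ 0,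
(b;q)_m / (c;q)_m = ∑_{n=0}^{m} (q^{-m};q)_n (c/b;q)_n / ((q;q)_n (c;q)_n) · (b q^m)^n,
as an identity in ℚ(q, b, c). -/
theorem terminating_2phi1 (m : ℕ) :
    qPoch bV qV m / qPoch cV qV m =
      ∑ n ∈ Finset.range (m + 1),
        qPoch (qV ^ (-(m : ℤ))) qV n * qPoch (cV / bV) qV n /
          (qPoch qV qV n * qPoch cV qV n) * (bV * qV ^ m) ^ n :=
  qPoch_div_qPoch_eq_sum (MvPolynomial.algebraMap_fractionRing_ne_zero (MvPolynomial.X_ne_zero 0))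
    one_sub_qV_pow_succ_ne_zero
    (MvPolynomial.algebraMap_fractionRing_ne_zero (MvPolynomial.X_ne_zero 1))
    one_sub_cV_mul_qV_pow_ne_zero m
end

section
/- For a partition μ of n with multiplicities m_i = m_i(μ), the specialization w_μ(0,t) of the Macdonald weight equals (-1)^{n-ℓ(μ)} t^{2n(μ)+n-∑_i binom(m_i+1, 2)} ∏_i (t;t)_{m_i}. -/
open Finset

/-- The parts of a partition as a weakly decreasing list. -/
def partsList {n : ℕ} (μ : n.Partition) : List ℕ := (μ.parts.sort (· ≤ ·)).reverse

/-- Length of row i (0-indexed) of the Young diagram of μ. -/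
def pRowLen {n : ℕ} (μ : n.Partition) (i : ℕ) : ℕ := (partsList μ).getD i 0

/-- Length of column j (0-indexed) of the Young diagram of μ. -/
def pColLen {n : ℕ} (μ : n.Partition) (j : ℕ) : ℕ :=
  Multiset.card (μ.parts.filter (fun p => j < p))

/-- The cells (i,j) of the Young diagram of μ (i = row index, j = column index). -/
def pCells {n : ℕ} (μ : n.Partition) : Finset (ℕ × ℕ) :=
  (Finset.range n ×ˢ Finset.range n).filter (fun c => c.2 < pRowLen μ c.1)

/-- The arm a(c) of a cell. -/
def pArm {n : ℕ} (μ : n.Partition) (c : ℕ × ℕ) : ℕ := pRowLen μ c.1 - c.2 - 1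

/-- The leg l(c) of a cell. -/
def pLeg {n : ℕ} (μ : n.Partition) (c : ℕ × ℕ) : ℕ := pColLen μ c.2 - c.1 - 1

/-- n(μ) = ∑_{c∈μ} l(c). -/
def nStat {n : ℕ} (μ : n.Partition) : ℕ := ∑ c ∈ pCells μ, pLeg μ c

/-- Length ℓ(μ). -/
def pLen {n : ℕ} (μ : n.Partition) : ℕ := Multiset.card μ.parts

/-- Multiplicity m_i(μ) of i as a part of μ. -/
def pMult {n : ℕ} (μ : n.Partition) (i : ℕ) : ℕ := μ.parts.count i

/-- The Macdonald weight w_μ(q,t) = ∏_{c∈μ} (q^{a(c)} - t^{l(c)+1})(t^{l(c)} - q^{a(c)+1}). -/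
noncomputable def wMu {n : ℕ} (μ : n.Partition) (q t : RatFunc ℚ) : RatFunc ℚ :=
  ∏ c ∈ pCells μ, ((q ^ pArm μ c - t ^ (pLeg μ c + 1)) * (t ^ pLeg μ c - q ^ (pArm μ c + 1)))

/-!
At `q = 0` every cell contributes `t^(2l+1)`, times `-1` if its arm is positive and times
`t^-(l+1) (1 - t^(l+1))` if it is the last cell of its row. For the last cell of row `i`, `l + 1`
is the number of rows `i' ≥ i` of the same length as row `i`; so over the `m_k` rows of length `k`
it runs through `1, …, m_k`, and the last cells contribute `∏_k t^-binom(m_k+1, 2) (t;t)_{m_k}`.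
-/

theorem List.lt_length_filter_iff_lt_getD {L : List ℕ} (hL : L.Pairwise (· ≥ ·)) (j i : ℕ) :
    i < (L.filter (j < ·)).length ↔ j < L.getD i 0 := by
  induction L generalizing i with
  | nil => simp
  | cons a L ih =>
    rw [List.pairwise_cons] at hL
    by_cases ha : j < a
    · cases i <;> simp [ha, ih hL.2]
    · have hnil : L.filter (j < ·) = [] :=
        List.filter_eq_nil_iff.2 fun b hb => by simpa using (hL.1 b hb).trans (not_lt.1 ha)
      cases i with
      | zero => simp [ha, hnil]
      | succ i => simpa [ha, hnil] using ih hL.2 i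

theorem List.sum_range_getD {L : List ℕ} {m : ℕ} (hm : L.length ≤ m) :
    ∑ i ∈ Finset.range m, L.getD i 0 = L.sum := by
  induction L generalizing m with
  | nil => simp
  | cons a L ih =>
    obtain ⟨m, rfl⟩ : ∃ k, m = k + 1 := Nat.exists_eq_succ_of_ne_zero (by simp at hm; omega)
    simp only [Finset.sum_range_succ', List.getD_cons_succ, List.getD_cons_zero, List.sum_cons]
    rw [ih (by simpa using hm), add_comm]

theorem zero_pow_sub_pow_mul_pow_sub_zero_pow {K : Type*} [Field K] {t : K} (ht : t ≠ 0)
    (a l : ℕ) :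
    ((0 : K) ^ a - t ^ (l + 1)) * (t ^ l - 0 ^ (a + 1))
      = t ^ (2 * l + 1) * if a = 0 then (t ^ (l + 1))⁻¹ * (1 - t ^ (l + 1)) else -1 := by
  rcases eq_or_ne a 0 with rfl | ha
  · simp only [pow_zero, if_true]
    field_simp
    ring
  · rw [zero_pow ha, zero_pow a.succ_ne_zero, if_neg ha]
    ring

theorem prod_Icc_inv_pow_mul_one_sub_pow {K : Type*} [Field K] (t : K) (m : ℕ) :
    ∏ j ∈ Icc 1 m, ((t ^ j)⁻¹ * (1 - t ^ j)) = (t ^ (m + 1).choose 2)⁻¹ * qPoch t t m := by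
  induction m with
  | zero => simp [qPoch]
  | succ m ih =>
    rw [prod_Icc_succ_top (Nat.le_add_left 1 m), ih, qPoch, qPoch, prod_range_succ,
      Nat.choose_succ_succ' (m + 1), Nat.choose_one_right, pow_add, mul_inv]
    ring

section YoungDiagram

variable {n : ℕ} (μ : n.Partition)

theorem coe_partsList : (partsList μ : Multiset ℕ) = μ.parts := by
  simp [partsList]

theorem partsList_pairwise_ge : (partsList μ).Pairwise (· ≥ ·) := by
  rw [partsList, List.pairwise_reverse]
  exact μ.parts.pairwise_sort (· ≤ ·)

theorem length_partsList : (partsList μ).length = pLen μ := by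
  rw [pLen, ← coe_partsList, Multiset.coe_card]

theorem pLen_le : pLen μ ≤ n := by
  simpa [pLen, ← μ.parts_sum] using Multiset.card_nsmul_le_sum fun _ hx => μ.parts_pos hx

theorem pRowLen_mem_parts {i : ℕ} (hi : i < pLen μ) : pRowLen μ i ∈ μ.parts := by
  rw [← length_partsList] at hi
  rw [pRowLen, List.getD_eq_getElem _ _ hi, ← coe_partsList, Multiset.mem_coe]
  exact List.getElem_mem hi

theorem pRowLen_of_pLen_le {i : ℕ} (hi : pLen μ ≤ i) : pRowLen μ i = 0 :=
  List.getD_eq_default _ _ (length_partsList μ ▸ hi)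

theorem pRowLen_le (i : ℕ) : pRowLen μ i ≤ n := by
  rcases lt_or_ge i (pLen μ) with hi | hi
  · exact Nat.Partition.le_of_mem_parts (pRowLen_mem_parts μ hi)
  · simp [pRowLen_of_pLen_le μ hi]

theorem pRowLen_pos_iff (i : ℕ) : 0 < pRowLen μ i ↔ i < pLen μ := by
  refine ⟨fun h => ?_, fun hi => μ.parts_pos (pRowLen_mem_parts μ hi)⟩
  by_contra! hi
  simp [pRowLen_of_pLen_le μ hi] at h

theorem lt_pColLen_iff (i j : ℕ) : i < pColLen μ j ↔ j < pRowLen μ i := by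
  rw [pColLen, ← coe_partsList, Multiset.filter_coe, Multiset.coe_card]
  exact List.lt_length_filter_iff_lt_getD (partsList_pairwise_ge μ) j i

theorem card_pCells : #(pCells μ) = n := by
  have hrow : ∀ i, (range n).filter (· < pRowLen μ i) = range (pRowLen μ i) := fun i => by
    ext j
    simpa using fun hj => hj.trans_le (pRowLen_le μ i)
  rw [pCells, card_filter, sum_product]
  simp_rw [← card_filter, hrow, card_range]
  calc ∑ i ∈ range n, pRowLen μ i = (partsList μ).sum :=
        List.sum_range_getD ((length_partsList μ).trans_le (pLen_le μ))
    _ = n := by rw [← Multiset.sum_coe, coe_partsList, μ.parts_sum]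

theorem pColLen_eq_add_pMult (k : ℕ) : pColLen μ k = pColLen μ (k + 1) + pMult μ (k + 1) := by
  rw [pColLen, pColLen, pMult, Multiset.count_eq_card_filter_eq, ← Multiset.card_add,
    ← Multiset.filter_add_not (k + 1 < ·) (μ.parts.filter (k < ·)), Multiset.filter_filter,
    Multiset.filter_filter]
  congr 2 <;> exact Multiset.filter_congr fun _ _ => by omega

theorem filter_pCells_pArm_eq_zero :
    (pCells μ).filter (pArm μ · = 0) = (range (pLen μ)).image fun i => (i, pRowLen μ i - 1) := by
  ext ⟨i, j⟩
  have hpos := pRowLen_pos_iff μ i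
  have hrow := pRowLen_le μ i
  have hlen := pLen_le μ
  rw [mem_filter, mem_image, pCells, mem_filter, mem_product]
  simp only [pArm, mem_range, Prod.mk.injEq]
  constructor
  · rintro ⟨⟨-, hj⟩, harm⟩
    exact ⟨i, by omega, rfl, by omega⟩
  · rintro ⟨i, hi, rfl, rfl⟩
    omega

theorem pLeg_corner_add_one {i : ℕ} (hi : i < pLen μ) :
    pLeg μ (i, pRowLen μ i - 1) + 1 = pColLen μ (pRowLen μ i - 1) - i := by
  have := (lt_pColLen_iff μ i (pRowLen μ i - 1)).2 (by have := (pRowLen_pos_iff μ i).2 hi; omega)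
  simp only [pLeg]
  omega

theorem prod_range_pLen_pLeg_corner {M : Type*} [CommMonoid M] (f : ℕ → M) :
    ∏ i ∈ range (pLen μ), f (pLeg μ (i, pRowLen μ i - 1) + 1)
      = ∏ k ∈ Icc 1 n, ∏ j ∈ Icc 1 (pMult μ k), f j := by
  rw [← prod_fiberwise_of_maps_to (g := pRowLen μ) (t := Icc 1 n)
    fun i hi => mem_Icc.2 ⟨(pRowLen_pos_iff μ i).2 (mem_range.1 hi), pRowLen_le μ i⟩]
  refine prod_congr rfl fun k hk => ?_
  obtain ⟨k, rfl⟩ := Nat.exists_eq_add_one.2 (mem_Icc.1 hk).1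
  have hrows : (range (pLen μ)).filter (pRowLen μ · = k + 1)
      = Ico (pColLen μ (k + 1)) (pColLen μ k) := by
    ext i
    simp only [mem_filter, mem_range, mem_Ico, ← pRowLen_pos_iff, ← not_lt, lt_pColLen_iff]
    omega
  calc _ = ∏ i ∈ Ico (pColLen μ (k + 1)) (pColLen μ k), f (pColLen μ k - i) := by
        rw [← hrows]
        refine prod_congr rfl fun i hi => ?_
        rw [mem_filter, mem_range] at hi
        rw [pLeg_corner_add_one μ hi.1, hi.2, Nat.add_sub_cancel]
    _ = ∏ j ∈ Ico 1 (pMult μ (k + 1) + 1), f j := by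
        rw [prod_Ico_reflect f _ (Nat.le_succ _), Nat.add_sub_cancel_left]
        congr 2
        rw [pColLen_eq_add_pMult μ k]
        omega
    _ = _ := by rw [Ico_add_one_right_eq_Icc]

theorem card_filter_pCells_pArm_ne_zero : #{c ∈ pCells μ | ¬pArm μ c = 0} = n - pLen μ := by
  have hcorners : #{c ∈ pCells μ | pArm μ c = 0} = pLen μ := by
    rw [filter_pCells_pArm_eq_zero, card_image_of_injective _ fun _ _ h => congrArg Prod.fst h,
      card_range]
  have hsplit := card_filter_add_card_filter_not (s := pCells μ) (p := (pArm μ · = 0))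
  rw [card_pCells, hcorners] at hsplit
  omega

theorem prod_filter_pCells_pArm_eq_zero {M : Type*} [CommMonoid M] (f : ℕ → M) :
    ∏ c ∈ pCells μ with pArm μ c = 0, f (pLeg μ c + 1)
      = ∏ k ∈ Icc 1 n, ∏ j ∈ Icc 1 (pMult μ k), f j := by
  rw [filter_pCells_pArm_eq_zero, prod_image fun _ _ _ _ h => congrArg Prod.fst h,
    prod_range_pLen_pLeg_corner]

theorem sum_two_mul_pLeg_add_one : ∑ c ∈ pCells μ, (2 * pLeg μ c + 1) = 2 * nStat μ + n := by
  rw [sum_add_distrib, ← mul_sum, sum_const, card_pCells, smul_eq_mul, mul_one, nStat]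


theorem wMu_zero {t : RatFunc ℚ} (ht : t ≠ 0) :
    wMu μ 0 t = (-1) ^ (n - pLen μ) * t ^ (2 * nStat μ + n) *
      ∏ k ∈ Icc 1 n, ((t ^ (pMult μ k + 1).choose 2)⁻¹ * qPoch t t (pMult μ k)) := by
  rw [wMu, prod_congr rfl fun c _ => zero_pow_sub_pow_mul_pow_sub_zero_pow ht _ _,
    prod_mul_distrib, prod_pow_eq_pow_sum, sum_two_mul_pLeg_add_one, prod_ite, prod_const,
    card_filter_pCells_pArm_ne_zero,
    prod_filter_pCells_pArm_eq_zero μ fun j => (t ^ j)⁻¹ * (1 - t ^ j)]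
  simp_rw [prod_Icc_inv_pow_mul_one_sub_pow]
  ring

end YoungDiagram

/-- For μ ⊢ n with multiplicities m_i,
w_μ(0,t) = (-1)^{n-ℓ(μ)} t^{2n(μ)+n-∑_i binom(m_i+1,2)} ∏_i (t;t)_{m_i}, in ℚ(t). -/
theorem wMu_at_q_zero (n : ℕ) (μ : n.Partition) :
    wMu μ 0 (RatFunc.X : RatFunc ℚ) =
      (-1 : RatFunc ℚ) ^ (n - pLen μ) *
        (RatFunc.X : RatFunc ℚ) ^
          ((2 * nStat μ + n : ℤ) - ∑ i ∈ Finset.Icc 1 n, ((pMult μ i + 1).choose 2 : ℤ)) *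
        ∏ i ∈ Finset.Icc 1 n, qPoch (RatFunc.X : RatFunc ℚ) (RatFunc.X : RatFunc ℚ) (pMult μ i) := by
  have hX : (RatFunc.X : RatFunc ℚ) ≠ 0 := RatFunc.X_ne_zero
  have hexp : ((2 * nStat μ + n : ℤ) - ∑ i ∈ Icc 1 n, ((pMult μ i + 1).choose 2 : ℤ))
      = ((2 * nStat μ + n : ℕ) : ℤ) - ((∑ i ∈ Icc 1 n, (pMult μ i + 1).choose 2 : ℕ) : ℤ) := by
    push_cast
    rfl
  rw [wMu_zero μ hX, prod_mul_distrib, prod_inv_distrib, prod_pow_eq_pow_sum, hexp,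
    zpow_sub₀ hX, zpow_natCast, zpow_natCast, div_eq_mul_inv]
  ring
end
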